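/- arXiv:2407.00801 — 7 statements merged into one kernel-verified Lean document; each statement's English description precedes it below -/
import Mathlib

section
/- Let S be a nonempty finite type, p a probability vector on S, and V : S → ℝ. Let μ = ∑_{s∈S} p(s)·V(s), M = max_{s∈S} V(s) and m = min_{s∈S} V(s). Then the variance ∑_{s∈S} p(s)·(V(s) − μ)² is at most (M − μ)·(μ − m). -/
/-- Bhatia–Davis inequality: the variance of `V` under the probability
vector `p` is at most `(M − μ)·(μ − m)` where `M`, `m` are the max and min of `V`
and `μ` is its mean. -/
theorem bhatia_davis {S : Type*} [Fintype S] [Nonempty S]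
    (p V : S → ℝ) (hp : ∀ s, 0 ≤ p s) (hsum : ∑ s, p s = 1)
    (μ : ℝ) (hμ : μ = ∑ s, p s * V s) :
    ∑ s, p s * (V s - μ) ^ 2 ≤
      (Finset.univ.sup' Finset.univ_nonempty V - μ) *
        (μ - Finset.univ.inf' Finset.univ_nonempty V) := by
  set M := Finset.univ.sup' Finset.univ_nonempty V with hM
  set m := Finset.univ.inf' Finset.univ_nonempty V with hm
  have h2 : 0 ≤ ∑ s, p s * ((M - V s) * (V s - m)) :=
    Finset.sum_nonneg fun s _ =>
      mul_nonneg (hp s) (mul_nonneg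
        (sub_nonneg.2 (Finset.le_sup' V (Finset.mem_univ s)))
        (sub_nonneg.2 (Finset.inf'_le V (Finset.mem_univ s))))
  have e1 : ∑ s, p s * (V s - μ) ^ 2 =
      (∑ s, p s * V s ^ 2) - 2 * μ * (∑ s, p s * V s) + μ ^ 2 * (∑ s, p s) := by
    rw [Finset.mul_sum, Finset.mul_sum, ← Finset.sum_sub_distrib, ← Finset.sum_add_distrib]
    exact Finset.sum_congr rfl fun s _ => by ring
  have e2 : ∑ s, p s * ((M - V s) * (V s - m)) =
      (M + m) * (∑ s, p s * V s) - M * m * (∑ s, p s) - (∑ s, p s * V s ^ 2) := by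
    rw [Finset.mul_sum, Finset.mul_sum, ← Finset.sum_sub_distrib, ← Finset.sum_sub_distrib]
    exact Finset.sum_congr rfl fun s _ => by ring
  rw [e1, hsum, ← hμ]
  rw [e2, hsum, ← hμ] at h2
  nlinarith [h2]
end

section
/- Let Ω be a nonempty finite type, P and Q probability vectors on Ω, and f : Ω → ℝ. Then (∑_{ω∈Ω} (P(ω) − Q(ω))·f(ω))² ≤ 4·d_H(P,Q)²·( 2·∑_{ω∈Ω} Q(ω)·f(ω)² + ∑_{ω∈Ω} (P(ω) − Q(ω))·f(ω)² ), where d_H(P,Q)² = (1/2)·∑_{ω∈Ω} (√(P(ω)) − √(Q(ω)))² is the squared Hellinger distance. -/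
/-- Bound on `((P − Q)ᵀ f)²` via the squared Hellinger distance
`d_H(P,Q)² = (1/2)·∑ (√P − √Q)²`. -/
theorem hellinger_inner_product_bound {Ω : Type*} [Fintype Ω] [Nonempty Ω]
    (P Q f : Ω → ℝ)
    (hP : ∀ ω, 0 ≤ P ω) (hPsum : ∑ ω, P ω = 1)
    (hQ : ∀ ω, 0 ≤ Q ω) (hQsum : ∑ ω, Q ω = 1) :
    (∑ ω, (P ω - Q ω) * f ω) ^ 2 ≤
      4 * ((1 / 2) * ∑ ω, (Real.sqrt (P ω) - Real.sqrt (Q ω)) ^ 2) *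
        (2 * ∑ ω, Q ω * f ω ^ 2 + ∑ ω, (P ω - Q ω) * f ω ^ 2) := by
  set a : Ω → ℝ := fun ω => Real.sqrt (P ω) - Real.sqrt (Q ω) with ha
  set b : Ω → ℝ := fun ω => (Real.sqrt (P ω) + Real.sqrt (Q ω)) * f ω with hb
  have key : ∀ ω, (P ω - Q ω) * f ω = a ω * b ω := by
    intro ω
    have hp := Real.sq_sqrt (hP ω)
    have hq := Real.sq_sqrt (hQ ω)
    simp only [ha, hb]
    linear_combination f ω * hq - f ω * hp
  have cs : (∑ ω, a ω * b ω) ^ 2 ≤ (∑ ω, a ω ^ 2) * (∑ ω, b ω ^ 2) :=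
    Finset.sum_mul_sq_le_sq_mul_sq Finset.univ a b
  have hb2 : (∑ ω, b ω ^ 2) ≤ ∑ ω, 2 * (P ω + Q ω) * f ω ^ 2 := by
    apply Finset.sum_le_sum
    intro ω _
    have hp := Real.sq_sqrt (hP ω)
    have hq := Real.sq_sqrt (hQ ω)
    have h2 : (Real.sqrt (P ω) - Real.sqrt (Q ω)) ^ 2 ≥ 0 := sq_nonneg _
    simp only [hb]
    have hf := sq_nonneg (f ω)
    nlinarith [sq_nonneg (Real.sqrt (P ω) - Real.sqrt (Q ω)), sq_nonneg (f ω),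
      mul_nonneg (sq_nonneg (Real.sqrt (P ω) - Real.sqrt (Q ω))) (sq_nonneg (f ω))]
  have ha_nonneg : 0 ≤ ∑ ω, a ω ^ 2 := Finset.sum_nonneg fun ω _ => sq_nonneg _
  have hsum_eq : ∑ ω, 2 * (P ω + Q ω) * f ω ^ 2
      = 2 * (2 * ∑ ω, Q ω * f ω ^ 2 + ∑ ω, (P ω - Q ω) * f ω ^ 2) := by
    rw [mul_add, Finset.mul_sum, Finset.mul_sum, Finset.mul_sum, ← Finset.sum_add_distrib]
    exact Finset.sum_congr rfl fun ω _ => by ring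
  calc (∑ ω, (P ω - Q ω) * f ω) ^ 2 = (∑ ω, a ω * b ω) ^ 2 := by
        congr 1; exact Finset.sum_congr rfl fun ω _ => key ω
    _ ≤ (∑ ω, a ω ^ 2) * (∑ ω, b ω ^ 2) := cs
    _ ≤ (∑ ω, a ω ^ 2) * ∑ ω, 2 * (P ω + Q ω) * f ω ^ 2 := by
        exact mul_le_mul_of_nonneg_left hb2 ha_nonneg
    _ = 4 * ((1 / 2) * ∑ ω, (Real.sqrt (P ω) - Real.sqrt (Q ω)) ^ 2) *
        (2 * ∑ ω, Q ω * f ω ^ 2 + ∑ ω, (P ω - Q ω) * f ω ^ 2) := by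
        rw [hsum_eq]; simp only [ha]; ring
end

section
/- Fix M ≥ 0 and for each n ≥ 1 define the truncated nested radical T_n(M) by the backward recursion y_n = √(M^{2^n}) and y_k = √(M^{2^k} + y_{k+1}) for 1 ≤ k < n, setting T_n(M) = y_1. Then T_n(M) = M·x(n−1), where x is the sequence x(0) = 1, x(k+1) = √(1 + x(k)); consequently T_n(M) ≤ φ·M for every n ≥ 1, and T_n(M) converges to φ·M as n → ∞, where φ = (1+√5)/2 is the golden ratio. -/
/-!
Since `M ^ 2 ^ (k + 1) = (M ^ 2 ^ k) ^ 2`, the factor `M ^ 2 ^ k` can be pulled out of the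
`k`-th radical, which turns the nested radical into `M` times the `(n - 1)`-st iterate of
`t ↦ √(1 + t)` started at `1`. That map fixes `φ` (as `φ ^ 2 = φ + 1`), preserves `t ≤ φ`, and
satisfies `(√(1 + t) - φ) (√(1 + t) + φ) = t - φ`, so it contracts distances to `φ` by the
factor `φ⁻¹`.
-/

open Filter Topology
open scoped goldenRatio

namespace Real

theorem sqrt_one_add_goldenRatio : √(1 + φ) = φ := by
  rw [add_comm, ← goldenRatio_sq, sqrt_sq goldenRatio_pos.le]

theorem sqrt_one_add_le_goldenRatio {t : ℝ} (ht : t ≤ φ) : √(1 + t) ≤ φ :=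
  sqrt_one_add_goldenRatio ▸ sqrt_le_sqrt (by linarith)

theorem abs_sqrt_one_add_sub_goldenRatio_le {t : ℝ} (ht : -1 ≤ t) :
    |√(1 + t) - φ| ≤ φ⁻¹ * |t - φ| := by
  set s := √(1 + t)
  have hs : 0 ≤ s := sqrt_nonneg _
  have hfactor : (s - φ) * (s + φ) = t - φ := by
    have : s ^ 2 = 1 + t := sq_sqrt (by linarith)
    linear_combination this - goldenRatio_sq
  have hφ := goldenRatio_pos
  rw [le_inv_mul_iff₀ hφ, ← hfactor, abs_mul, abs_of_pos (by linarith : 0 < s + φ), mul_comm φ]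
  exact mul_le_mul_of_nonneg_left (by linarith) (abs_nonneg _)

theorem tendsto_goldenRatio_of_sqrt_one_add {x : ℕ → ℝ} (hx : ∀ k, x (k + 1) = √(1 + x k)) :
    Tendsto x atTop (𝓝 φ) := by
  -- `x 0` is arbitrary, but from `x 1` on every term is a square root, hence `≥ -1`.
  rw [← tendsto_add_atTop_iff_nat 1, tendsto_iff_norm_sub_tendsto_zero]
  have hgeom (k : ℕ) : ‖x (k + 1) - φ‖ ≤ φ⁻¹ ^ k * ‖x 1 - φ‖ := by
    refine le_geom (u := fun k => ‖x (k + 1) - φ‖) (inv_nonneg.2 goldenRatio_pos.le) k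
      fun j _ => ?_
    rw [hx (j + 1)]
    exact abs_sqrt_one_add_sub_goldenRatio_le (by linarith [hx j ▸ sqrt_nonneg (1 + x j)])
  refine squeeze_zero (fun _ => norm_nonneg _) hgeom ?_
  simpa using (tendsto_pow_atTop_nhds_zero_of_lt_one (inv_nonneg.2 goldenRatio_pos.le)
    (inv_lt_one_of_one_lt₀ one_lt_goldenRatio)).mul_const ‖x 1 - φ‖

theorem le_goldenRatio_of_sqrt_one_add {x : ℕ → ℝ} (h0 : x 0 ≤ φ)
    (hx : ∀ k, x (k + 1) = √(1 + x k)) (k : ℕ) : x k ≤ φ := by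
  induction k with
  | zero => exact h0
  | succ k ih => exact hx k ▸ sqrt_one_add_le_goldenRatio ih

end Real

open Real

/-- The radical starting at level `k + 1` and truncated `d` levels further equals
`M ^ 2 ^ k` times the `d`-th iterate of `t ↦ √(1 + t)` at `1`. -/
theorem nestedRadical_eq_mul_iterate {M : ℝ} (hM : 0 ≤ M) {y : ℕ → ℕ → ℝ}
    (hyn : ∀ n, 1 ≤ n → y n n = √(M ^ 2 ^ n))
    (hyk : ∀ n k, 1 ≤ k → k < n → y n k = √(M ^ 2 ^ k + y n (k + 1)))
    {x : ℕ → ℝ} (hx0 : x 0 = 1) (hx : ∀ k, x (k + 1) = √(1 + x k)) (d k : ℕ) :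
    y (k + 1 + d) (k + 1) = M ^ 2 ^ k * x d := by
  have hsq (k : ℕ) : M ^ 2 ^ (k + 1) = (M ^ 2 ^ k) ^ 2 := by rw [pow_succ, pow_mul]
  have hpow (k : ℕ) : 0 ≤ M ^ 2 ^ k := pow_nonneg hM _
  induction d generalizing k with
  | zero => rw [hyn _ le_add_self, hx0, mul_one, hsq, sqrt_sq (hpow k)]
  | succ d ih =>
    have hnext : y (k + 1 + (d + 1)) (k + 1 + 1) = M ^ 2 ^ (k + 1) * x d := by
      rw [← ih (k + 1)]; ring_nf
    rw [hyk _ _ le_add_self (by omega), hnext, hsq, ← mul_one_add, sqrt_mul (sq_nonneg _),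
      sqrt_sq (hpow k), hx]

/-- Truncated nested radical: with `y n n = √(M^{2^n})`,
`y n k = √(M^{2^k} + y n (k+1))` for `1 ≤ k < n` and `T n = y n 1`, one has
`T n = M · x (n−1)` where `x 0 = 1`, `x (k+1) = √(1 + x k)`; hence
`T n ≤ φ·M` for all `n ≥ 1` and `T n → φ·M`, with `φ = (1+√5)/2`. -/
theorem truncated_nested_radical (M : ℝ) (hM : 0 ≤ M)
    (y : ℕ → ℕ → ℝ)
    (hyn : ∀ n, 1 ≤ n → y n n = Real.sqrt (M ^ (2 ^ n)))
    (hyk : ∀ n k, 1 ≤ k → k < n → y n k = Real.sqrt (M ^ (2 ^ k) + y n (k + 1)))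
    (T : ℕ → ℝ) (hT : ∀ n, 1 ≤ n → T n = y n 1)
    (x : ℕ → ℝ) (hx0 : x 0 = 1) (hx : ∀ k, x (k + 1) = Real.sqrt (1 + x k)) :
    (∀ n, 1 ≤ n → T n = M * x (n - 1)) ∧
      (∀ n, 1 ≤ n → T n ≤ (1 + Real.sqrt 5) / 2 * M) ∧
      Filter.Tendsto T Filter.atTop (nhds ((1 + Real.sqrt 5) / 2 * M)) := by
  change _ ∧ (∀ n, 1 ≤ n → T n ≤ φ * M) ∧ Tendsto T atTop (𝓝 (φ * M))
  have hTx : ∀ n, 1 ≤ n → T n = M * x (n - 1) := fun n hn => by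
    obtain ⟨d, rfl⟩ := Nat.exists_eq_add_of_le hn
    simpa [hT _ hn] using nestedRadical_eq_mul_iterate hM hyn hyk hx0 hx d 0
  refine ⟨hTx, fun n hn => ?_, ?_⟩
  · rw [hTx n hn, mul_comm]
    exact mul_le_mul_of_nonneg_right
      (le_goldenRatio_of_sqrt_one_add (hx0 ▸ one_lt_goldenRatio.le) hx _) hM
  · have hlim : Tendsto (fun n => M * x (n - 1)) atTop (𝓝 (φ * M)) := by
      rw [mul_comm φ]
      exact ((tendsto_goldenRatio_of_sqrt_one_add hx).comp (tendsto_sub_atTop_nat 1)).const_mul M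
    exact hlim.congr' (eventually_atTop.2 ⟨1, fun n hn => (hTx n hn).symm⟩)
end

section
/- Let S be a nonempty finite type and γ ∈ [0,1). For each s ∈ S let p(s,·) : S → ℝ and p'(s,·) : S → ℝ be probability vectors on S, and let r, r' : S → ℝ. Suppose V, V' : S → ℝ satisfy the Bellman equations V(s) = r(s) + γ·∑_{s'∈S} p(s,s')·V(s') and V'(s) = r'(s) + γ·∑_{s'∈S} p'(s,s')·V'(s') for all s ∈ S. Then max_{s∈S} |V'(s) − V(s)| ≤ (1/(1−γ)) · max_{s∈S} ( |r'(s) − r(s)| + γ·|∑_{s'∈S} (p'(s,s') − p(s,s'))·V(s')| ). -/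
/-- Sup-norm bound on the difference of the value functions of two Markov
reward processes with the same discount `γ ∈ [0,1)`. -/
theorem value_function_difference_bound {S : Type*} [Fintype S] [Nonempty S]
    (γ : ℝ) (hγ0 : 0 ≤ γ) (hγ1 : γ < 1)
    (p p' : S → S → ℝ)
    (hp : ∀ s s', 0 ≤ p s s') (hpsum : ∀ s, ∑ s', p s s' = 1)
    (hp' : ∀ s s', 0 ≤ p' s s') (hp'sum : ∀ s, ∑ s', p' s s' = 1)
    (r r' V V' : S → ℝ)
    (hV : ∀ s, V s = r s + γ * ∑ s', p s s' * V s')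
    (hV' : ∀ s, V' s = r' s + γ * ∑ s', p' s s' * V' s') :
    Finset.univ.sup' Finset.univ_nonempty (fun s => |V' s - V s|) ≤
      (1 / (1 - γ)) *
        Finset.univ.sup' Finset.univ_nonempty
          (fun s => |r' s - r s| + γ * |∑ s', (p' s s' - p s s') * V s'|) := by
  set M := Finset.univ.sup' Finset.univ_nonempty (fun s => |V' s - V s|) with hMdef
  set D := Finset.univ.sup' Finset.univ_nonempty
      (fun s => |r' s - r s| + γ * |∑ s', (p' s s' - p s s') * V s'|) with hDdef
  have h1 : (0:ℝ) < 1 - γ := by linarith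
  have hM : M ≤ D + γ * M := by
    apply Finset.sup'_le
    intro s _
    have key : V' s - V s = (r' s - r s) + γ * (∑ s', (p' s s' - p s s') * V s')
        + γ * ∑ s', p' s s' * (V' s' - V s') := by
      rw [hV s, hV' s]
      simp only [sub_mul, mul_sub, Finset.sum_sub_distrib]
      ring
    have hsum : |∑ s', p' s s' * (V' s' - V s')| ≤ M := by
      calc |∑ s', p' s s' * (V' s' - V s')| ≤ ∑ s', |p' s s' * (V' s' - V s')| :=
            Finset.abs_sum_le_sum_abs _ _
        _ ≤ ∑ s', p' s s' * M := by
            apply Finset.sum_le_sum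
            intro i _
            rw [abs_mul, abs_of_nonneg (hp' s i)]
            exact mul_le_mul_of_nonneg_left
              (Finset.le_sup' (fun s => |V' s - V s|) (Finset.mem_univ i)) (hp' s i)
        _ = M := by rw [← Finset.sum_mul, hp'sum s, one_mul]
    have hD : |r' s - r s| + γ * |∑ s', (p' s s' - p s s') * V s'| ≤ D :=
      Finset.le_sup' (fun s => |r' s - r s| + γ * |∑ s', (p' s s' - p s s') * V s'|)
        (Finset.mem_univ s)
    calc |V' s - V s|
        ≤ |(r' s - r s) + γ * (∑ s', (p' s s' - p s s') * V s')|
          + |γ * ∑ s', p' s s' * (V' s' - V s')| := by rw [key]; exact abs_add_le _ _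
      _ ≤ (|r' s - r s| + γ * |∑ s', (p' s s' - p s s') * V s'|) + γ * M := by
          gcongr
          · calc |(r' s - r s) + γ * (∑ s', (p' s s' - p s s') * V s')|
                ≤ |r' s - r s| + |γ * (∑ s', (p' s s' - p s s') * V s')| := abs_add_le _ _
              _ = |r' s - r s| + γ * |∑ s', (p' s s' - p s s') * V s'| := by
                  rw [abs_mul, abs_of_nonneg hγ0]
          · rw [abs_mul, abs_of_nonneg hγ0]
            exact mul_le_mul_of_nonneg_left hsum hγ0
      _ ≤ D + γ * M := by linarith
  calc M ≤ D / (1 - γ) := (le_div_iff₀ h1).mpr (by nlinarith)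
    _ = 1 / (1 - γ) * D := by ring
end

section
/- Let S and A be nonempty finite types and γ ∈ [0,1). Consider two finite discounted MDPs φ = (P,r) and ψ = (P',r') on (S,A) with the same discount γ, and a deterministic policy π : S → A. Suppose V : S → ℝ satisfies V(s) = r(s,π(s)) + γ·∑_{s'} P(s,π(s),s')·V(s') for all s, and V' : S → ℝ satisfies V'(s) = r'(s,π(s)) + γ·∑_{s'} P'(s,π(s),s')·V'(s') for all s. Define Q(s,a) = r(s,a) + γ·∑_{s'} P(s,a,s')·V(s') and Q'(s,a) = r'(s,a) + γ·∑_{s'} P'(s,a,s')·V'(s'). If for some state-action pair (s,a) one has Q'(s,a) > V'(s), then V(s) − Q(s,a) < |r'(s,a) − r(s,a)| + γ·|∑_{s'} (P'(s,a,s') − P(s,a,s'))·V(s')| + ((1+γ)/(1−γ)) · max_{s''∈S} ( |r'(s'',π(s'')) − r(s'',π(s''))| + γ·|∑_{s'} (P'(s'',π(s''),s') − P(s'',π(s''),s'))·V(s')| ). -/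
/-!
Write `Δ = V' - V`. Subtracting the two Bellman equations splits `Q'(x,b) - Q(x,b)` into the
one-step model deviation at `(x,b)` plus `γ` times a `P'`-average of `Δ`; along `π` this says
`Δ` is a `γ`-contraction perturbed by the deviations, so `‖Δ‖∞ ≤ M / (1 - γ)` where `M` is the
largest deviation along `π`. Since `a` is improving in `ψ`,
`V s - Q s a < (V s - V' s) + (Q' s a - Q s a)`, and both terms are controlled by `‖Δ‖∞`.
-/

open Finset

namespace DiscountedMDP

variable {S A : Type*} [Fintype S]

def qValue (γ : ℝ) (P : S → A → S → ℝ) (r : S → A → ℝ) (V : S → ℝ) (s : S) (a : A) : ℝ :=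
  r s a + γ * ∑ s', P s a s' * V s'

def modelDeviation (γ : ℝ) (P P' : S → A → S → ℝ) (r r' : S → A → ℝ) (V : S → ℝ)
    (s : S) (a : A) : ℝ :=
  |r' s a - r s a| + γ * |∑ s', (P' s a s' - P s a s') * V s'|

omit [Fintype S] in
theorem abs_le_div_one_sub_of_contraction [Finite S] {Δ : S → ℝ} {M γ : ℝ} (hγ : γ < 1)
    (hΔ : ∀ N, (∀ y, |Δ y| ≤ N) → ∀ x, |Δ x| ≤ M + γ * N) (x : S) :
    |Δ x| ≤ M / (1 - γ) := by
  have : Nonempty S := ⟨x⟩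
  obtain ⟨x₀, hx₀⟩ := Finite.exists_max fun y => |Δ y|
  have hmax := hΔ _ hx₀ x₀
  rw [le_div_iff₀ (sub_pos.mpr hγ)]
  nlinarith [hx₀ x]

theorem abs_sum_mul_le_of_stochastic {w f : S → ℝ} {N : ℝ} (hw : ∀ i, 0 ≤ w i)
    (hw₁ : ∑ i, w i = 1) (hf : ∀ i, |f i| ≤ N) : |∑ i, w i * f i| ≤ N :=
  calc |∑ i, w i * f i| ≤ ∑ i, w i * |f i| := by
        refine (abs_sum_le_sum_abs _ _).trans_eq (sum_congr rfl fun i _ => ?_)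
        rw [abs_mul, abs_of_nonneg (hw i)]
    _ ≤ ∑ i, w i * N := sum_le_sum fun i _ => mul_le_mul_of_nonneg_left (hf i) (hw i)
    _ = N := by rw [← sum_mul, hw₁, one_mul]

theorem qValue_sub_qValue (γ : ℝ) (P P' : S → A → S → ℝ) (r r' : S → A → ℝ) (V V' : S → ℝ)
    (s : S) (a : A) :
    qValue γ P' r' V' s a - qValue γ P r V s a =
      (r' s a - r s a) + γ * ∑ s', (P' s a s' - P s a s') * V s' +
        γ * ∑ s', P' s a s' * (V' s' - V s') := by
  simp only [qValue, sub_mul, mul_sub, sum_sub_distrib]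
  ring

theorem abs_qValue_sub_qValue_le {γ N : ℝ} (hγ : 0 ≤ γ) {P P' : S → A → S → ℝ}
    {r r' : S → A → ℝ} {V V' : S → ℝ} {s : S} {a : A} (hP' : ∀ s', 0 ≤ P' s a s')
    (hP'sum : ∑ s', P' s a s' = 1) (hN : ∀ y, |V' y - V y| ≤ N) :
    |qValue γ P' r' V' s a - qValue γ P r V s a| ≤ modelDeviation γ P P' r r' V s a + γ * N := by
  rw [qValue_sub_qValue, modelDeviation]
  have hdrift := abs_sum_mul_le_of_stochastic hP' hP'sum hN
  calc _ ≤ |r' s a - r s a| + |γ * ∑ s', (P' s a s' - P s a s') * V s'| +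
          |γ * ∑ s', P' s a s' * (V' s' - V s')| := abs_add_three _ _ _
    _ ≤ _ := by
        rw [abs_mul, abs_mul, abs_of_nonneg hγ]
        gcongr

end DiscountedMDP

open DiscountedMDP

theorem suboptimality_gap_bound_general {S A : Type*}
    [Fintype S] [Nonempty S]
    (γ : ℝ) (hγ0 : 0 ≤ γ) (hγ1 : γ < 1)
    (P P' : S → A → S → ℝ) (r r' : S → A → ℝ)
    (hP' : ∀ s a s', 0 ≤ P' s a s') (hP'sum : ∀ s a, ∑ s', P' s a s' = 1)
    (π : S → A) (V V' : S → ℝ)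
    (hV : ∀ s, V s = r s (π s) + γ * ∑ s', P s (π s) s' * V s')
    (hV' : ∀ s, V' s = r' s (π s) + γ * ∑ s', P' s (π s) s' * V' s')
    (Q Q' : S → A → ℝ)
    (hQ : ∀ s a, Q s a = r s a + γ * ∑ s', P s a s' * V s')
    (hQ' : ∀ s a, Q' s a = r' s a + γ * ∑ s', P' s a s' * V' s')
    (s : S) (a : A) (himp : Q' s a > V' s) :
    V s - Q s a <
      |r' s a - r s a| + γ * |∑ s', (P' s a s' - P s a s') * V s'| +
        ((1 + γ) / (1 - γ)) *
          Finset.univ.sup' Finset.univ_nonempty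
            (fun s'' => |r' s'' (π s'') - r s'' (π s'')| +
              γ * |∑ s', (P' s'' (π s'') s' - P s'' (π s'') s') * V s'|) := by
  show V s - Q s a < modelDeviation γ P P' r r' V s a + (1 + γ) / (1 - γ) *
    univ.sup' univ_nonempty fun x => modelDeviation γ P P' r r' V x (π x)
  set M := univ.sup' univ_nonempty fun x => modelDeviation γ P P' r r' V x (π x)
  have hV_q : ∀ x, V x = qValue γ P r V x (π x) := hV
  have hV'_q : ∀ x, V' x = qValue γ P' r' V' x (π x) := hV'
  have hΔ : ∀ x, |V' x - V x| ≤ M / (1 - γ) :=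
    abs_le_div_one_sub_of_contraction hγ1 fun N hN x => by
      rw [hV_q x, hV'_q x]
      exact (abs_qValue_sub_qValue_le hγ0 (hP' x _) (hP'sum x _) hN).trans
        (by gcongr; exact le_sup' (fun x => modelDeviation γ P P' r r' V x (π x)) (mem_univ x))
  have hQ_gap : Q' s a - Q s a ≤ modelDeviation γ P P' r r' V s a + γ * (M / (1 - γ)) := by
    rw [hQ, hQ']
    exact (le_abs_self _).trans (abs_qValue_sub_qValue_le hγ0 (hP' s a) (hP'sum s a) hΔ)
  have hV_gap : V s - V' s ≤ M / (1 - γ) :=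
    (le_abs_self _).trans (abs_sub_comm (V' s) (V s) ▸ hΔ s)
  calc V s - Q s a < (V s - V' s) + (Q' s a - Q s a) := by linarith
    _ ≤ M / (1 - γ) + (modelDeviation γ P P' r r' V s a + γ * (M / (1 - γ))) := by gcongr
    _ = _ := by ring

/-- Quantitative suboptimality-gap inequality: if in the alternative MDP
`ψ = (P',r')` the action `a` is improving for policy `π` at state `s`
(`Q'(s,a) > V'(s)`), then the gap `V(s) − Q(s,a)` in `φ = (P,r)` is bounded by
the deviations between `ψ` and `φ`. -/
theorem suboptimality_gap_bound {S A : Type*}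
    [Fintype S] [Nonempty S] [Fintype A] [Nonempty A]
    (γ : ℝ) (hγ0 : 0 ≤ γ) (hγ1 : γ < 1)
    (P P' : S → A → S → ℝ) (r r' : S → A → ℝ)
    (hP : ∀ s a s', 0 ≤ P s a s') (hPsum : ∀ s a, ∑ s', P s a s' = 1)
    (hP' : ∀ s a s', 0 ≤ P' s a s') (hP'sum : ∀ s a, ∑ s', P' s a s' = 1)
    (π : S → A) (V V' : S → ℝ)
    (hV : ∀ s, V s = r s (π s) + γ * ∑ s', P s (π s) s' * V s')
    (hV' : ∀ s, V' s = r' s (π s) + γ * ∑ s', P' s (π s) s' * V' s')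
    (Q Q' : S → A → ℝ)
    (hQ : ∀ s a, Q s a = r s a + γ * ∑ s', P s a s' * V s')
    (hQ' : ∀ s a, Q' s a = r' s a + γ * ∑ s', P' s a s' * V' s')
    (s : S) (a : A) (himp : Q' s a > V' s) :
    V s - Q s a <
      |r' s a - r s a| + γ * |∑ s', (P' s a s' - P s a s') * V s'| +
        ((1 + γ) / (1 - γ)) *
          Finset.univ.sup' Finset.univ_nonempty
            (fun s'' => |r' s'' (π s'') - r s'' (π s'')| +
              γ * |∑ s', (P' s'' (π s'') s' - P s'' (π s'') s') * V s'|) :=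
  suboptimality_gap_bound_general γ hγ0 hγ1 P P' r r' hP' hP'sum π V V' hV hV' Q Q' hQ hQ' s a himp
end

section
/- Let S and A be nonempty finite types with A having at least two elements, let π* : S → A, and let B = {(s,a) ∈ S × A : a ≠ π*(s)}. Let H : S × A → ℝ satisfy H(s,a) > 0 for all (s,a) ∈ B, and let H₀ > 0. For a strictly positive probability vector ω on S × A define Ũ(ω) = max_{(s,a)∈B} H(s,a)/ω(s,a) + H₀ / min_{s∈S} ω(s,π*(s)). Set Γ = ∑_{(s,a)∈B} H(s,a) + √(|S|·H₀·∑_{(s,a)∈B} H(s,a)) and define ω*(s,a) = H(s,a)/Γ for (s,a) ∈ B and ω*(s,π*(s)) = √(H₀·∑_{(s,a)∈B} H(s,a)/|S|)/Γ for each s. Then ω* is a strictly positive probability vector on S × A, every strictly positive probability vector ω satisfies Ũ(ω) ≥ (√(∑_{(s,a)∈B} H(s,a)) + √(|S|·H₀))², equality holds at ω = ω*, and moreover (√(∑_{(s,a)∈B} H(s,a)) + √(|S|·H₀))² ≤ 2·(∑_{(s,a)∈B} H(s,a) + |S|·H₀). -/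
/-!
Write `b = √(∑_B H)` and `c = √(|S| H₀)`. For any allocation `ω`, let `x` be its total mass on the
suboptimal pairs `B` and `y = |S| · min_s ω(s, π*(s))`, so `x + y ≤ 1`. Summing `H ≤ M ω` over `B`,
where `M` is the maximal ratio, gives `M ≥ b² / x`, while the second term of `Ũ` is `c² / y`; and
`b² / x + c² / y ≥ (b + c)²` whenever `x + y ≤ 1` (Cauchy–Schwarz). The allocation `ω*` makes every
ratio `H / ω*` equal to `Γ = b (b + c)` and splits the mass as `x = b / (b + c)`, `y = c / (b + c)`,
which is the equality case.
-/

open Finset Real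

theorem sq_sqrt_add_sqrt_le_div_add_div {B C x y : ℝ} (hB : 0 ≤ B) (hC : 0 ≤ C)
    (hx : 0 < x) (hy : 0 < y) (hxy : x + y ≤ 1) : (√B + √C) ^ 2 ≤ B / x + C / y := by
  obtain ⟨b, hb, rfl⟩ : ∃ b, 0 ≤ b ∧ B = b ^ 2 := ⟨√B, sqrt_nonneg B, (sq_sqrt hB).symm⟩
  obtain ⟨c, hc, rfl⟩ : ∃ c, 0 ≤ c ∧ C = c ^ 2 := ⟨√C, sqrt_nonneg C, (sq_sqrt hC).symm⟩
  rw [sqrt_sq hb, sqrt_sq hc]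
  have cauchy_schwarz : (b + c) ^ 2 ≤ (b ^ 2 / x + c ^ 2 / y) * (x + y) := by
    rw [div_add_div _ _ hx.ne' hy.ne', div_mul_eq_mul_div, le_div_iff₀ (by positivity)]
    nlinarith [sq_nonneg (b * y - c * x)]
  calc (b + c) ^ 2 ≤ (b ^ 2 / x + c ^ 2 / y) * (x + y) := cauchy_schwarz
    _ ≤ b ^ 2 / x + c ^ 2 / y := mul_le_of_le_one_right (by positivity) hxy

theorem add_sqrt_mul_eq_sqrt_mul_add_sqrt {B C : ℝ} (hB : 0 ≤ B) (hC : 0 ≤ C) :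
    B + √(C * B) = √B * (√B + √C) := by
  rw [sqrt_mul hC, mul_add, mul_self_sqrt hB, mul_comm]

theorem sqrt_mul_div_eq_sqrt_mul_sqrt_div {B H₀ n : ℝ} (hB : 0 ≤ B) (hH₀ : 0 ≤ H₀) (hn : 0 < n) :
    √(H₀ * B / n) = √B * √(n * H₀) / n := by
  rw [sqrt_eq_iff_eq_sq (by positivity) (by positivity), div_pow, mul_pow, sq_sqrt hB,
    sq_sqrt (by positivity)]
  field_simp

theorem setOf_exists_eq_eq_range {ι α : Type*} (g : ι → α) :
    {x | ∃ i, x = g i} = Set.range g := by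
  ext
  simp [eq_comm]

section Allocation

variable {S A : Type*} [Fintype S] [Fintype A] {πst : S → A}

theorem le_sSup_offPolicy_ratio {H ω : S × A → ℝ} {s : S} {a : A}
    (ha : a ≠ πst s) :
    H (s, a) / ω (s, a) ≤ sSup {x : ℝ | ∃ s a, a ≠ πst s ∧ x = H (s, a) / ω (s, a)} := by
  refine le_csSup ((Set.finite_range fun q => H q / ω q).subset ?_).bddAbove ⟨s, a, ha, rfl⟩
  rintro _ ⟨s, a, -, rfl⟩
  exact ⟨(s, a), rfl⟩

variable [DecidableEq A] (πst)

/-- The suboptimal state–action pairs, `B` in the paper. -/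
def offPolicy : Finset (S × A) := univ.filter fun q => q.2 ≠ πst q.1

@[simp]
theorem mem_offPolicy {q : S × A} : q ∈ offPolicy πst ↔ q.2 ≠ πst q.1 := by
  simp [offPolicy]

theorem offPolicy_nonempty [Nonempty S] [Nontrivial A] : (offPolicy πst).Nonempty := by
  obtain ⟨s⟩ := ‹Nonempty S›
  obtain ⟨a, ha⟩ := exists_ne (πst s)
  exact ⟨(s, a), (mem_offPolicy πst).2 ha⟩

theorem sum_eq_sum_offPolicy_add_sum_onPolicy {M : Type*} [AddCommMonoid M] (f : S × A → M) :
    ∑ q, f q = ∑ q ∈ offPolicy πst, f q + ∑ s, f (s, πst s) := by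
  rw [offPolicy, ← sum_filter_add_sum_filter_not univ (fun q : S × A => q.2 ≠ πst q.1)]
  congr 1
  simp only [not_not, sum_filter, Fintype.sum_prod_type, sum_ite_eq', mem_univ, if_true]

variable {πst}

theorem sq_sqrt_add_sqrt_le_of_allocation [Nonempty S] [Nontrivial A] {H : S × A → ℝ} {H₀ : ℝ}
    (hH : ∀ s a, a ≠ πst s → 0 ≤ H (s, a)) (hH₀ : 0 ≤ H₀)
    {ω : S × A → ℝ} (hω : ∀ q, 0 < ω q) (hω1 : ∑ q, ω q = 1) {M m : ℝ}
    (hM : ∀ s a, a ≠ πst s → H (s, a) / ω (s, a) ≤ M) (hm : 0 < m)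
    (hmω : ∀ s, m ≤ ω (s, πst s)) :
    (√(∑ q ∈ offPolicy πst, H q) + √(Fintype.card S * H₀)) ^ 2 ≤ M + H₀ / m := by
  set x := ∑ q ∈ offPolicy πst, ω q
  have hn : (0 : ℝ) < Fintype.card S := Nat.cast_pos.2 Fintype.card_pos
  have hx : 0 < x := sum_pos (fun q _ => hω q) (offPolicy_nonempty πst)
  have hxy : x + Fintype.card S * m ≤ 1 := by
    rw [← hω1, sum_eq_sum_offPolicy_add_sum_onPolicy πst ω]
    gcongr
    simpa using sum_le_sum fun s (_ : s ∈ univ) => hmω s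
  have hBM : (∑ q ∈ offPolicy πst, H q) / x ≤ M := by
    rw [div_le_iff₀ hx, mul_sum]
    exact sum_le_sum fun q hq => (div_le_iff₀ (hω q)).1 (hM q.1 q.2 ((mem_offPolicy πst).1 hq))
  calc _ ≤ (∑ q ∈ offPolicy πst, H q) / x + Fintype.card S * H₀ / (Fintype.card S * m) :=
        sq_sqrt_add_sqrt_le_div_add_div
          (sum_nonneg fun q hq => hH q.1 q.2 ((mem_offPolicy πst).1 hq)) (by positivity) hx
          (by positivity) hxy
    _ ≤ M + H₀ / m := by rw [mul_div_mul_left _ _ hn.ne']; gcongr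

theorem sq_sqrt_add_sqrt_le_sSup_add_div_sInf [Nonempty S] [Nontrivial A]
    {H : S × A → ℝ} {H₀ : ℝ} (hH : ∀ s a, a ≠ πst s → 0 ≤ H (s, a)) (hH₀ : 0 ≤ H₀)
    {ω : S × A → ℝ} (hω : ∀ q, 0 < ω q) (hω1 : ∑ q, ω q = 1) :
    (√(∑ q ∈ offPolicy πst, H q) + √(Fintype.card S * H₀)) ^ 2 ≤
      sSup {x : ℝ | ∃ s a, a ≠ πst s ∧ x = H (s, a) / ω (s, a)} +
        H₀ / sInf {x : ℝ | ∃ s, x = ω (s, πst s)} := by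
  rw [setOf_exists_eq_eq_range]
  obtain ⟨s₀, hs₀⟩ := exists_eq_ciInf_of_finite (f := fun s => ω (s, πst s))
  have hm : 0 < ⨅ s, ω (s, πst s) := hs₀ ▸ hω _
  exact sq_sqrt_add_sqrt_le_of_allocation hH hH₀ hω hω1
    (fun s a ha => le_sSup_offPolicy_ratio ha) hm fun s => ciInf_le (Set.finite_range _).bddBelow s

theorem sum_twoLevel {H ω : S × A → ℝ} {κ Γ : ℝ}
    (hω : ∀ s a, ω (s, a) = if a = πst s then κ / Γ else H (s, a) / Γ) :
    ∑ q, ω q = (Fintype.card S * κ + ∑ q ∈ offPolicy πst, H q) / Γ := by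
  rw [sum_eq_sum_offPolicy_add_sum_onPolicy πst ω, add_div, add_comm, sum_div]
  congr 1
  · simp [hω, mul_div_assoc]
  · exact sum_congr rfl fun q hq => by
      rw [hω q.1 q.2, if_neg ((mem_offPolicy πst).1 hq)]

theorem sSup_add_div_sInf_twoLevel [Nonempty S] [Nontrivial A] {H ω : S × A → ℝ} {κ Γ H₀ : ℝ}
    (hω : ∀ s a, ω (s, a) = if a = πst s then κ / Γ else H (s, a) / Γ)
    (hH : ∀ s a, a ≠ πst s → H (s, a) ≠ 0) :
    sSup {x : ℝ | ∃ s a, a ≠ πst s ∧ x = H (s, a) / ω (s, a)} +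
      H₀ / sInf {x : ℝ | ∃ s, x = ω (s, πst s)} = Γ + H₀ / (κ / Γ) := by
  have ratio_eq : ∀ s a, a ≠ πst s → H (s, a) / ω (s, a) = Γ := fun s a ha => by
    rw [hω, if_neg ha, div_div_cancel₀ (hH s a ha)]
  obtain ⟨⟨s₀, a₀⟩, hq₀⟩ := offPolicy_nonempty πst
  have ha₀ := (mem_offPolicy πst).1 hq₀
  have ratios : {x : ℝ | ∃ s a, a ≠ πst s ∧ x = H (s, a) / ω (s, a)} = {Γ} := by
    refine Set.eq_singleton_iff_unique_mem.2 ⟨⟨s₀, a₀, ha₀, (ratio_eq s₀ a₀ ha₀).symm⟩, ?_⟩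
    rintro _ ⟨s, a, ha, rfl⟩
    exact ratio_eq s a ha
  rw [ratios, csSup_singleton, setOf_exists_eq_eq_range]
  simp only [hω, if_true, Set.range_const, csInf_singleton]

end Allocation

/-- Closed-form optimal generative allocation: the allocation `ω*` defined from
the difficulty constants `H(s,a)` (suboptimal pairs) and `H₀` (optimal pairs)
is a strictly positive probability vector minimizing
`Ũ(ω) = max_{(s,a): a ≠ π*(s)} H(s,a)/ω(s,a) + H₀ / min_s ω(s,π*(s))`, with
optimal value `(√(∑ H) + √(|S|·H₀))² ≤ 2·(∑ H + |S|·H₀)`. -/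
theorem generative_allocation_closed_form {S A : Type*}
    [Fintype S] [Nonempty S] [Fintype A] [DecidableEq A]
    (πst : S → A) (hA : 2 ≤ Fintype.card A)
    (H : S × A → ℝ) (hH : ∀ s a, a ≠ πst s → 0 < H (s, a))
    (H₀ : ℝ) (hH₀ : 0 < H₀)
    (Bsum : ℝ)
    (hBsum : Bsum = ∑ q ∈ Finset.univ.filter (fun q : S × A => q.2 ≠ πst q.1), H q)
    (Γ : ℝ)
    (hΓ : Γ = Bsum + Real.sqrt ((Fintype.card S : ℝ) * H₀ * Bsum))
    (ωst : S × A → ℝ)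
    (hωst : ∀ s a, ωst (s, a) =
      if a = πst s then Real.sqrt (H₀ * Bsum / (Fintype.card S : ℝ)) / Γ
      else H (s, a) / Γ)
    (U : (S × A → ℝ) → ℝ)
    (hU : ∀ ω, U ω =
      sSup {x : ℝ | ∃ s a, a ≠ πst s ∧ x = H (s, a) / ω (s, a)} +
        H₀ / sInf {x : ℝ | ∃ s, x = ω (s, πst s)}) :
    ((∀ q, 0 < ωst q) ∧ ∑ q, ωst q = 1) ∧
      (∀ ω : S × A → ℝ, (∀ q, 0 < ω q) → ∑ q, ω q = 1 →
        (Real.sqrt Bsum + Real.sqrt ((Fintype.card S : ℝ) * H₀)) ^ 2 ≤ U ω) ∧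
      U ωst = (Real.sqrt Bsum + Real.sqrt ((Fintype.card S : ℝ) * H₀)) ^ 2 ∧
      (Real.sqrt Bsum + Real.sqrt ((Fintype.card S : ℝ) * H₀)) ^ 2 ≤
        2 * (Bsum + (Fintype.card S : ℝ) * H₀) := by
  have : Nontrivial A := Fintype.one_lt_card_iff_nontrivial.1 hA
  change Bsum = ∑ q ∈ offPolicy πst, H q at hBsum
  have hn : (0 : ℝ) < Fintype.card S := Nat.cast_pos.2 Fintype.card_pos
  have hB : 0 < Bsum := hBsum ▸ sum_pos (fun q hq => hH q.1 q.2 ((mem_offPolicy πst).1 hq))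
    (offPolicy_nonempty πst)
  have hC : 0 < (Fintype.card S : ℝ) * H₀ := by positivity
  have hb : 0 < √Bsum := sqrt_pos.2 hB
  have hc : 0 < √(Fintype.card S * H₀) := sqrt_pos.2 hC
  rw [add_sqrt_mul_eq_sqrt_mul_add_sqrt hB.le hC.le] at hΓ
  rw [sqrt_mul_div_eq_sqrt_mul_sqrt_div hB.le hH₀.le hn] at hωst
  refine ⟨⟨fun ⟨s, a⟩ => ?_, ?_⟩, fun ω hω hω1 => ?_, ?_, ?_⟩
  · rw [hωst, hΓ]
    split_ifs with ha
    · positivity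
    · exact div_pos (hH s a ha) (by positivity)
  · rw [sum_twoLevel hωst, ← hBsum, hΓ]
    field_simp
    linear_combination -sq_sqrt hB.le
  · rw [hU, hBsum]
    exact sq_sqrt_add_sqrt_le_sSup_add_div_sInf (fun s a ha => (hH s a ha).le) hH₀.le hω hω1
  · rw [hU, sSup_add_div_sInf_twoLevel hωst fun s a ha => (hH s a ha).ne', hΓ]
    field_simp
    linear_combination -sq_sqrt hC.le
  · calc _ ≤ 2 * (√Bsum ^ 2 + √(Fintype.card S * H₀) ^ 2) := add_sq_le
      _ = _ := by rw [sq_sqrt hB.le, sq_sqrt hC.le]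
end

section
/- Let S and A be nonempty finite types, γ ∈ [0,1), P : S → A → S → ℝ a transition function whose distributions P(s,a,·) are probability vectors, and r : S → A → ℝ. Let π : S → A be a deterministic policy and V : S → ℝ satisfy the Bellman equation V(s) = r(s,π(s)) + γ·∑_{s'} P(s,π(s),s')·V(s') for all s. Suppose that no action is improving for V, i.e., for all s ∈ S and a ∈ A: r(s,a) + γ·∑_{s'} P(s,a,s')·V(s') ≤ V(s). Then for every deterministic policy π' : S → A and every W : S → ℝ satisfying W(s) = r(s,π'(s)) + γ·∑_{s'} P(s,π'(s),s')·W(s') for all s, one has W(s) ≤ V(s) for all s ∈ S; that is, π is an optimal policy. -/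
/-- If no action is improving for the value function `V` of policy `π`
(i.e. `Q(s,a) ≤ V(s)` for all `(s,a)`), then `π` is optimal: the value `W` of
any other deterministic policy `π'` satisfies `W ≤ V` pointwise. -/
theorem optimal_of_no_improving_action {S A : Type*}
    [Fintype S] [Nonempty S] [Fintype A] [Nonempty A]
    (γ : ℝ) (hγ0 : 0 ≤ γ) (hγ1 : γ < 1)
    (P : S → A → S → ℝ) (r : S → A → ℝ)
    (hP : ∀ s a s', 0 ≤ P s a s') (hPsum : ∀ s a, ∑ s', P s a s' = 1)
    (π : S → A) (V : S → ℝ)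
    (hV : ∀ s, V s = r s (π s) + γ * ∑ s', P s (π s) s' * V s')
    (hnoimp : ∀ s a, r s a + γ * ∑ s', P s a s' * V s' ≤ V s)
    (π' : S → A) (W : S → ℝ)
    (hW : ∀ s, W s = r s (π' s) + γ * ∑ s', P s (π' s) s' * W s') :
    ∀ s, W s ≤ V s := by
  obtain ⟨s₀, -, hs₀⟩ := Finset.exists_max_image (Finset.univ : Finset S)
    (fun s => W s - V s) ⟨Classical.arbitrary S, Finset.mem_univ _⟩
  set M := W s₀ - V s₀ with hM
  have hmax : ∀ s, W s - V s ≤ M := fun s => hs₀ s (Finset.mem_univ s)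
  have key : M ≤ γ * M := by
    have h1 : W s₀ - V s₀ ≤ γ * ∑ s', P s₀ (π' s₀) s' * (W s' - V s') := by
      have h2 := hnoimp s₀ (π' s₀)
      have h3 := hW s₀
      have : ∑ s', P s₀ (π' s₀) s' * (W s' - V s')
          = (∑ s', P s₀ (π' s₀) s' * W s') - ∑ s', P s₀ (π' s₀) s' * V s' := by
        rw [← Finset.sum_sub_distrib]; congr 1; ext s'; ring
      rw [this]; nlinarith
    have h4 : ∑ s', P s₀ (π' s₀) s' * (W s' - V s') ≤ M := by
      calc ∑ s', P s₀ (π' s₀) s' * (W s' - V s')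
          ≤ ∑ s', P s₀ (π' s₀) s' * M := by
            apply Finset.sum_le_sum
            intro s' _
            exact mul_le_mul_of_nonneg_left (hmax s') (hP _ _ _)
        _ = M := by rw [← Finset.sum_mul, hPsum, one_mul]
    calc M = W s₀ - V s₀ := hM
      _ ≤ γ * ∑ s', P s₀ (π' s₀) s' * (W s' - V s') := h1
      _ ≤ γ * M := mul_le_mul_of_nonneg_left h4 hγ0
  have hM0 : M ≤ 0 := by nlinarith
  intro s
  linarith [hmax s]
end
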